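/- Let M = B ×_{f₁} M₁ × ⋯ ×_{f_m} M_m be a multiply warped product with semi-symmetric metric connection ∇̄ associated to P ∈ Γ(TM_r) for a fixed r. If ζ = ζ_B + Σᵢ ζᵢ is a semi-symmetric metric Killing vector field on M, then: (1) ζ_B is a Killing vector field on B provided Σᵢ π(ζᵢ) = 0; (2) each ζᵢ is a Killing vector field on Mᵢ provided Σᵢ π(ζᵢ) = 0 and Σᵢ[fᵢ·ζ_B(fᵢ)·‖Xᵢ‖ᵢ² − π(Xᵢ)·g(X,ζ)] = 0 for all vector fields X = X_B + Σᵢ Xᵢ on M. -/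
import Mathlib


/-!
An abstract (axiomatized) framework for pseudo-Riemannian geometry, following the paper
"Killing Vector Fields on Multiply Warped Products with a Semi-symmetric Metric Connection".
Here `R` plays the role of the commutative ring of smooth functions on the (product)
manifold, `V` the `R`-module of vector fields, `g` the pseudo-Riemannian metric,
`nabla` the Levi-Civita connection, `bracket` the Lie bracket of vector fields,
`act X h` the action `X(h)` of a vector field `X` on a function `h`,
`ric` the Ricci curvature, and `compactNoBoundary` records that the underlying
manifold is compact and without boundary.
-/
structure PR (R : Type*) [CommRing R] (V : Type*) [AddCommGroup V] [Module R V] where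
  g : V → V → R
  g_symm : ∀ X Y, g X Y = g Y X
  g_addl : ∀ X Y Z, g (X + Y) Z = g X Z + g Y Z
  g_smull : ∀ (a : R) (X Y : V), g (a • X) Y = a * g X Y
  nabla : V → V → V
  bracket : V → V → V
  act : V → R → R
  ric : V → V → R
  compactNoBoundary : Prop

namespace PR

variable {R : Type*} [CommRing R] {V : Type*} [AddCommGroup V] [Module R V]

/-- The semi-symmetric metric connection associated to `P`:
`∇̄_X Y = ∇_X Y + π(Y)X − g(X,Y)P`, where `π(X) = g(X,P)`. -/
def snabla (C : PR R V) (P X Y : V) : V :=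
  C.nabla X Y + C.g Y P • X - C.g X Y • P

/-- The Lie derivative of the metric: `(L_ζ g)(X,Y) = g(∇_X ζ, Y) + g(∇_Y ζ, X)`. -/
def lieg (C : PR R V) (ζ X Y : V) : R :=
  C.g (C.nabla X ζ) Y + C.g (C.nabla Y ζ) X

/-- The semi-symmetric metric Lie derivative of the metric:
`(L̄_ζ g)(X,Y) = g(∇̄_X ζ, Y) + g(∇̄_Y ζ, X)`. -/
def slieg (C : PR R V) (P ζ X Y : V) : R :=
  C.g (C.snabla P X ζ) Y + C.g (C.snabla P Y ζ) X

/-- `ζ` is a Killing vector field iff `g(∇_X ζ, X) = 0` for every vector field `X`. -/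
def IsKilling (C : PR R V) (ζ : V) : Prop := ∀ X, C.g (C.nabla X ζ) X = 0

/-- `ζ` is a semi-symmetric metric Killing vector field iff `g(∇̄_X ζ, X) = 0`
for every vector field `X`. -/
def IsSKilling (C : PR R V) (P ζ : V) : Prop := ∀ X, C.g (C.snabla P X ζ) X = 0

/-- The second Lie derivative of the metric, `(L_ζ L_ζ g)(X,Y) =
g(∇_ζ∇_X ζ − ∇_{[ζ,X]}ζ, Y) + g(X, ∇_ζ∇_Y ζ − ∇_{[ζ,Y]}ζ) + 2g(∇_X ζ, ∇_Y ζ)`. -/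
def lie2g (C : PR R V) (ζ X Y : V) : R :=
  C.g (C.nabla ζ (C.nabla X ζ) - C.nabla (C.bracket ζ X) ζ) Y
    + C.g X (C.nabla ζ (C.nabla Y ζ) - C.nabla (C.bracket ζ Y) ζ)
    + 2 * C.g (C.nabla X ζ) (C.nabla Y ζ)

/-- `ζ` is a 2-Killing vector field iff `L_ζ L_ζ g = 0`. -/
def IsTwoKilling (C : PR R V) (ζ : V) : Prop := ∀ X Y, C.lie2g ζ X Y = 0

end PR

/-- A multiply warped product `M = B ×_{f₁} M₁ × ⋯ ×_{f_m} M_m`: the data of the base and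
the `m` fibres, the warping functions `f i` (with multiplicative inverses `finv i`) and
their gradients `gradf i` on `B`. Vector fields on `M` are pairs `X = (X_B, (X_i)_i)` of
(lifts of) vector fields on the factors. -/
structure MW (R : Type*) [CommRing R] {m : ℕ} (VB : Type*) (V : Fin m → Type*)
    [AddCommGroup VB] [Module R VB] [∀ i, AddCommGroup (V i)] [∀ i, Module R (V i)] where
  CB : PR R VB
  C : ∀ i, PR R (V i)
  f : Fin m → R
  finv : Fin m → R
  f_inv : ∀ i, f i * finv i = 1
  gradf : Fin m → VB
  gradf_spec : ∀ i Y, CB.g (gradf i) Y = CB.act Y (f i)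

namespace MW

variable {R : Type*} [CommRing R] {m : ℕ} {VB : Type*} {V : Fin m → Type*}
  [AddCommGroup VB] [Module R VB] [∀ i, AddCommGroup (V i)] [∀ i, Module R (V i)]

/-- The multiply warped product metric `g = g_B ⊕ f₁²g₁ ⊕ ⋯ ⊕ f_m²g_m`. -/
def gW (W : MW R VB V) (X Y : VB × (∀ i, V i)) : R :=
  W.CB.g X.1 Y.1 + ∑ i, (W.f i) ^ 2 * (W.C i).g (X.2 i) (Y.2 i)

/-- The semi-symmetric metric connection of the multiply warped product for `P ∈ Γ(TB)`
(combining the five formulas of Lemma 4.1 of the paper). -/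
def snablaB (W : MW R VB V) (P : VB) (X Y : VB × (∀ i, V i)) : VB × (∀ i, V i) :=
  (W.CB.snabla P X.1 Y.1 - (∑ i, (W.f i * (W.C i).g (X.2 i) (Y.2 i)) • W.gradf i)
      - (∑ i, (W.f i) ^ 2 * (W.C i).g (X.2 i) (Y.2 i)) • P,
    fun i => (W.C i).nabla (X.2 i) (Y.2 i)
      + (W.CB.act X.1 (W.f i) * W.finv i) • Y.2 i
      + (W.CB.act Y.1 (W.f i) * W.finv i + W.CB.g Y.1 P) • X.2 i)

/-- For `P ∈ Γ(TM_r)`, the value of the 1-form `π` on the lift of the `j`-th component of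
a vertical field `z`: `π(z_j) = f_r² g_r((z_j)_r, P)` (nonzero only for `j = r`). -/
def piV (W : MW R VB V) (r : Fin m) (P : V r) (z : ∀ i, V i) (j : Fin m) : R :=
  (W.f r) ^ 2 * (W.C r).g (Pi.single j (z j) r) P

/-- The semi-symmetric metric connection of the multiply warped product for
`P ∈ Γ(TM_r)` (combining the five formulas of Lemma 4.2 of the paper). -/
def snablaF (W : MW R VB V) (r : Fin m) (P : V r) (X Y : VB × (∀ i, V i)) :
    VB × (∀ i, V i) :=
  (W.CB.nabla X.1 Y.1 + ((W.f r) ^ 2 * (W.C r).g (Y.2 r) P) • X.1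
      - ∑ i, (W.f i * (W.C i).g (X.2 i) (Y.2 i)) • W.gradf i,
    (fun i => (W.C i).nabla (X.2 i) (Y.2 i)
      + (W.CB.act X.1 (W.f i) * W.finv i) • Y.2 i
      + (W.CB.act Y.1 (W.f i) * W.finv i) • X.2 i
      + ((W.f r) ^ 2 * (W.C r).g (Y.2 r) P) • X.2 i)
    + Pi.single r ((-(W.gW X Y)) • P))

/-- Semi-symmetric metric Lie derivative of the multiply warped metric, `P ∈ Γ(TB)`. -/
def sliegB (W : MW R VB V) (P : VB) (ζ X Y : VB × (∀ i, V i)) : R :=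
  W.gW (W.snablaB P X ζ) Y + W.gW (W.snablaB P Y ζ) X

/-- Semi-symmetric metric Lie derivative of the multiply warped metric, `P ∈ Γ(TM_r)`. -/
def sliegF (W : MW R VB V) (r : Fin m) (P : V r) (ζ X Y : VB × (∀ i, V i)) : R :=
  W.gW (W.snablaF r P X ζ) Y + W.gW (W.snablaF r P Y ζ) X

/-- `ζ` is a semi-symmetric metric Killing field of the multiply warped product,
`P ∈ Γ(TB)`. -/
def IsSKillingB (W : MW R VB V) (P : VB) (ζ : VB × (∀ i, V i)) : Prop :=
  ∀ X, W.gW (W.snablaB P X ζ) X = 0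

/-- `ζ` is a semi-symmetric metric Killing field of the multiply warped product,
`P ∈ Γ(TM_r)`. -/
def IsSKillingF (W : MW R VB V) (r : Fin m) (P : V r) (ζ : VB × (∀ i, V i)) : Prop :=
  ∀ X, W.gW (W.snablaF r P X ζ) X = 0

/-- The Levi-Civita connection of the multiply warped product (Lemma 6.7 of the paper). -/
def nablaT (W : MW R VB V) (X Y : VB × (∀ i, V i)) : VB × (∀ i, V i) :=
  (W.CB.nabla X.1 Y.1 - ∑ i, (W.f i * (W.C i).g (X.2 i) (Y.2 i)) • W.gradf i,
    fun i => (W.C i).nabla (X.2 i) (Y.2 i)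
      + (W.CB.act X.1 (W.f i) * W.finv i) • Y.2 i
      + (W.CB.act Y.1 (W.f i) * W.finv i) • X.2 i)

/-- The Lie bracket of (lifted) vector fields on the multiply warped product. -/
def bracketT (W : MW R VB V) (X Y : VB × (∀ i, V i)) : VB × (∀ i, V i) :=
  (W.CB.bracket X.1 Y.1, fun i => (W.C i).bracket (X.2 i) (Y.2 i))

/-- The action of a vector field of the multiply warped product on functions. -/
def actT (W : MW R VB V) (X : VB × (∀ i, V i)) (h : R) : R :=
  W.CB.act X.1 h + ∑ i, (W.C i).act (X.2 i) h

/-- The Lie derivative of the multiply warped metric. -/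
def liegT (W : MW R VB V) (ζ X Y : VB × (∀ i, V i)) : R :=
  W.gW (W.nablaT X ζ) Y + W.gW (W.nablaT Y ζ) X

/-- The second Lie derivative `(L_ζ L_ζ g)(X,Y)` of the multiply warped metric. -/
def lie2T (W : MW R VB V) (ζ X Y : VB × (∀ i, V i)) : R :=
  W.gW (W.nablaT ζ (W.nablaT X ζ) - W.nablaT (W.bracketT ζ X) ζ) Y
    + W.gW X (W.nablaT ζ (W.nablaT Y ζ) - W.nablaT (W.bracketT ζ Y) ζ)
    + 2 * W.gW (W.nablaT X ζ) (W.nablaT Y ζ)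

/-- `ζ` is a 2-Killing vector field of the multiply warped product. -/
def IsTwoKillingT (W : MW R VB V) (ζ : VB × (∀ i, V i)) : Prop :=
  ∀ X Y, W.lie2T ζ X Y = 0

/-- The `(0,4)`-curvature `R(X,Y,Z,U) = g(∇_X∇_Y Z − ∇_Y∇_X Z − ∇_{[X,Y]}Z, U)`
of the multiply warped product. -/
def RmT (W : MW R VB V) (X Y Z U : VB × (∀ i, V i)) : R :=
  W.gW (W.nablaT X (W.nablaT Y Z) - W.nablaT Y (W.nablaT X Z)
    - W.nablaT (W.bracketT X Y) Z) U

/-- The squared area `A²(X,Y) = g(X,X)g(Y,Y) − g(X,Y)²` of the parallelogram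
generated by `X` and `Y`. -/
def A2 (W : MW R VB V) (X Y : VB × (∀ i, V i)) : R :=
  W.gW X X * W.gW Y Y - (W.gW X Y) ^ 2

end MW


namespace PR

variable {R : Type*} [CommRing R] {V : Type*} [AddCommGroup V] [Module R V]

lemma g_zerol (C : PR R V) (Y : V) : C.g 0 Y = 0 := by
  have h := C.g_smull 0 Y Y
  simpa using h

lemma g_zeror (C : PR R V) (X : V) : C.g X 0 = 0 := by
  rw [C.g_symm]; exact C.g_zerol X

lemma g_negl (C : PR R V) (X Y : V) : C.g (-X) Y = -C.g X Y := by
  have h := C.g_smull (-1) X Y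
  simpa using h

lemma g_subl (C : PR R V) (X Y Z : V) : C.g (X - Y) Z = C.g X Z - C.g Y Z := by
  rw [sub_eq_add_neg, C.g_addl, C.g_negl, sub_eq_add_neg]

lemma g_suml (C : PR R V) {ι : Type*} (s : Finset ι) (F : ι → V) (Y : V) :
    C.g (∑ i ∈ s, F i) Y = ∑ i ∈ s, C.g (F i) Y := by
  induction s using Finset.cons_induction with
  | empty => simp [C.g_zerol]
  | cons a s ha ih => rw [Finset.sum_cons, Finset.sum_cons, C.g_addl, ih]

end PR

section Expand

variable {R : Type*} [CommRing R] {m : ℕ} {VB : Type*} {V : Fin m → Type*}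
  [AddCommGroup VB] [Module R VB] [∀ i, AddCommGroup (V i)] [∀ i, Module R (V i)]

lemma MW.gW_snablaF (W : MW R VB V) (r : Fin m) (P : V r) (ζB : VB) (z : ∀ i, V i)
    (X : VB × (∀ i, V i)) :
    W.gW (W.snablaF r P X (ζB, z)) X
      = W.CB.g (W.CB.nabla X.1 ζB) X.1
        + ∑ i, (W.f i) ^ 2 * (W.C i).g ((W.C i).nabla (X.2 i) (z i)) (X.2 i)
        + (W.f r ^ 2 * (W.C r).g (z r) P) * W.gW X X
        + (∑ i, W.f i * W.CB.act ζB (W.f i) * (W.C i).g (X.2 i) (X.2 i)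
            - (W.f r ^ 2 * (W.C r).g (X.2 r) P) * W.gW X (ζB, z)) := by
  have hc : ∀ (i : Fin m) (a b : R),
      W.f i ^ 2 * (a * W.finv i * b) = W.f i * (a * b) := by
    intro i a b
    calc W.f i ^ 2 * (a * W.finv i * b)
        = (W.f i * W.finv i) * (W.f i * (a * b)) := by ring
      _ = W.f i * (a * b) := by rw [W.f_inv i, one_mul]
  have hsingle : ∀ (v : V r),
      (∑ i, W.f i ^ 2 * (W.C i).g ((Pi.single r v : ∀ i, V i) i) (X.2 i))
        = W.f r ^ 2 * (W.C r).g v (X.2 r) := by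
    intro v
    rw [Finset.sum_eq_single r]
    · rw [Pi.single_eq_same]
    · intro i _ hi
      rw [Pi.single_eq_of_ne hi, (W.C i).g_zerol, mul_zero]
    · simp
  simp only [MW.gW, MW.snablaF, Pi.add_apply, PR.g_subl, PR.g_addl, PR.g_smull,
    PR.g_suml, W.gradf_spec, mul_add]
  rw [Finset.sum_add_distrib, Finset.sum_add_distrib, Finset.sum_add_distrib,
    Finset.sum_add_distrib, hsingle]
  rw [show (∑ i, W.f i ^ 2 * (W.CB.act X.1 (W.f i) * W.finv i * (W.C i).g (z i) (X.2 i)))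
      = ∑ i, W.f i * ((W.C i).g (X.2 i) (z i) * W.CB.act X.1 (W.f i)) from
    Finset.sum_congr rfl fun i _ => by rw [hc, (W.C i).g_symm (z i)]; ring]
  rw [show (∑ i, W.f i ^ 2 * (W.CB.act ζB (W.f i) * W.finv i * (W.C i).g (X.2 i) (X.2 i)))
      = ∑ i, W.f i * W.CB.act ζB (W.f i) * (W.C i).g (X.2 i) (X.2 i) from
    Finset.sum_congr rfl fun i _ => by rw [hc]; ring]
  rw [(W.C r).g_smull, (W.C r).g_symm P]
  rw [Finset.mul_sum, Finset.mul_sum]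
  simp only [neg_mul, add_mul, neg_add, mul_neg, mul_add, Finset.mul_sum, Finset.sum_mul,
    mul_comm, mul_left_comm, mul_assoc]
  ring

end Expand

/-- **Proposition 4.10.** For a multiply warped product with semi-symmetric metric connection
associated to `P ∈ Γ(TM_r)` (for a fixed `r`), if `ζ = ζ_B + Σᵢ ζᵢ` is a semi-symmetric
metric Killing vector field on `M`, then:
(1) `ζ_B` is a Killing vector field on `B` provided `Σᵢ π(ζᵢ) = 0`;
(2) each `ζᵢ` is a Killing vector field on `Mᵢ` provided `Σᵢ π(ζᵢ) = 0` and
    `Σᵢ [fᵢζ_B(fᵢ)‖Xᵢ‖ᵢ² − π(Xᵢ)g(X,ζ)] = 0` for all `X = X_B + Σᵢ Xᵢ` on `M`. -/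
theorem statement_13 {R : Type*} [CommRing R] {m : ℕ} {VB : Type*} {V : Fin m → Type*}
    [AddCommGroup VB] [Module R VB] [∀ i, AddCommGroup (V i)] [∀ i, Module R (V i)]
    (W : MW R VB V) (r : Fin m) (P : V r) (ζB : VB) (z : ∀ i, V i)
    (h : W.IsSKillingF r P (ζB, z)) :
    ((∑ i, W.piV r P z i = 0) → W.CB.IsKilling ζB)
    ∧ ((∑ i, W.piV r P z i = 0) →
      (∀ X : VB × (∀ i, V i),
        ∑ i, (W.f i * W.CB.act ζB (W.f i) * (W.C i).g (X.2 i) (X.2 i)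
          - W.piV r P X.2 i * W.gW X (ζB, z)) = 0) →
      ∀ i, (W.C i).IsKilling (z i)) := by
  have hpix : ∀ (x : ∀ i, V i),
      (∑ j, W.piV r P x j) = W.f r ^ 2 * (W.C r).g (x r) P := by
    intro x
    unfold MW.piV
    rw [Finset.sum_eq_single r]
    · rw [Pi.single_eq_same]
    · intro j _ hj
      rw [Pi.single_eq_of_ne (Ne.symm hj), (W.C r).g_zerol, mul_zero]
    · simp
  have key : ∀ X : VB × (∀ i, V i),
      W.CB.g (W.CB.nabla X.1 ζB) X.1
        + ∑ i, (W.f i) ^ 2 * (W.C i).g ((W.C i).nabla (X.2 i) (z i)) (X.2 i)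
        + (W.f r ^ 2 * (W.C r).g (z r) P) * W.gW X X
        + (∑ i, W.f i * W.CB.act ζB (W.f i) * (W.C i).g (X.2 i) (X.2 i)
            - (W.f r ^ 2 * (W.C r).g (X.2 r) P) * W.gW X (ζB, z)) = 0 := by
    intro X
    rw [← W.gW_snablaF r P ζB z X]
    exact h X
  constructor
  · intro h0 XB
    have hc0 : W.f r ^ 2 * (W.C r).g (z r) P = 0 := by rw [← hpix z]; exact h0
    have k := key (XB, fun _ => 0)
    simp only [hc0, zero_mul, PR.g_zeror, PR.g_zerol, mul_zero, Finset.sum_const_zero,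
      add_zero, zero_sub, sub_zero, neg_zero] at k
    exact k
  · intro h0 h2 i x
    have hc0 : W.f r ^ 2 * (W.C r).g (z r) P = 0 := by rw [← hpix z]; exact h0
    have k := key (0, Pi.single i x)
    have h2' := h2 (0, Pi.single i x)
    rw [Finset.sum_sub_distrib, ← Finset.sum_mul, hpix] at h2'
    have hs : (∑ j, (W.f j) ^ 2 * (W.C j).g
          ((W.C j).nabla ((Pi.single i x : ∀ i, V i) j) (z j))
          ((Pi.single i x : ∀ i, V i) j))
        = W.f i ^ 2 * (W.C i).g ((W.C i).nabla x (z i)) x := by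
      rw [Finset.sum_eq_single i]
      · rw [Pi.single_eq_same]
      · intro j _ hj
        rw [Pi.single_eq_of_ne hj, (W.C j).g_zeror, mul_zero]
      · simp
    rw [hs] at k
    simp only [hc0, zero_mul, mul_zero, PR.g_zeror, PR.g_zerol, add_zero, zero_add] at k
    have hzero : W.f i ^ 2 * (W.C i).g ((W.C i).nabla x (z i)) x = 0 := by
      linear_combination k - h2'
    calc (W.C i).g ((W.C i).nabla x (z i)) x
        = (W.f i * W.finv i) ^ 2 * (W.C i).g ((W.C i).nabla x (z i)) x := by
          rw [W.f_inv i]; ring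
      _ = W.finv i ^ 2 * (W.f i ^ 2 * (W.C i).g ((W.C i).nabla x (z i)) x) := by ring
      _ = 0 := by rw [hzero, mul_zero]
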